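/- (Subdivision bound for quantization error) Let Λ be a finite maximal antichain and n ≥ Card(Λ). Then for each 0 < r < ∞, V_{n,r}(μ) ≤ C₂^r · inf{ Σ_{w∈Λ} p_w T_w^r V_{n_w,r}(μ) : n_w ≥ 1 for each w ∈ Λ, Σ_{w∈Λ} n_w ≤ n }. -/
import Mathlib


open Filter Topology MeasureTheory

/-- `f` is an infinitesimal similitude at `x` with value `D`. -/
def IsInfSimAt {X Y : Type*} [MetricSpace X] [MetricSpace Y] (f : X → Y) (x : X) (D : ℝ) : Prop :=
  ∀ u v : ℕ → X, (∀ m, u m ≠ v m) →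
    Tendsto u atTop (𝓝 x) → Tendsto v atTop (𝓝 x) →
    Tendsto (fun m => dist (f (u m)) (f (v m)) / dist (u m) (v m)) atTop (𝓝 D)

/-- For a word `w = w₁…wₙ`, `fw f w = f_{w₁} ∘ ⋯ ∘ f_{wₙ}`. -/
def fw {X : Type*} {N : ℕ} (f : Fin N → X → X) : List (Fin N) → X → X
  | [], x => x
  | i :: w, x => f i (fw f w x)

/-- The infinitesimal similitude of `f_w`, given via the chain rule. -/
def Dfw {X : Type*} {N : ℕ} (f : Fin N → X → X) (Df : Fin N → X → ℝ) :
    List (Fin N) → X → ℝ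
  | [], _ => 1
  | i :: w, x => Df i (fw f w x) * Dfw f Df w x

/-- The product probability `p_w` of a word. -/
def pword {N : ℕ} (p : Fin N → ℝ) (w : List (Fin N)) : ℝ := (w.map p).prod

/-- `Λ` is a finite maximal antichain of finite words over `Fin N`. -/
def IsFiniteMaximalAntichain {N : ℕ} (Λ : Finset (List (Fin N))) : Prop :=
  (∀ w ∈ Λ, w ≠ []) ∧
  (∀ σ : ℕ → Fin N, ∃ w ∈ Λ, ∃ k : ℕ, w = List.ofFn (fun i : Fin k => σ i)) ∧
  (∀ w ∈ Λ, ∀ w' ∈ Λ, w <+: w' → w = w')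

/-- The `n`-th quantization error of order `r` for `μ`. -/
noncomputable def Vnr {X : Type*} [MetricSpace X] [MeasurableSpace X]
    (μ : Measure X) (n : ℕ) (r : ℝ) : ℝ :=
  sInf { v : ℝ | ∃ A : Finset X, A.Nonempty ∧ A.card ≤ n ∧
    v = ∫ x, Metric.infDist x (A : Set X) ^ r ∂μ }

section Aux

variable {X : Type*} [MetricSpace X] [MeasurableSpace X]

lemma vnr_set_bddBelow (μ : Measure X) (n : ℕ) (r : ℝ) :
    BddBelow { v : ℝ | ∃ A : Finset X, A.Nonempty ∧ A.card ≤ n ∧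
      v = ∫ x, Metric.infDist x (A : Set X) ^ r ∂μ } := by
  refine ⟨0, ?_⟩
  rintro v ⟨A, -, -, rfl⟩
  exact integral_nonneg fun x => Real.rpow_nonneg Metric.infDist_nonneg r

lemma vnr_le (μ : Measure X) (n : ℕ) (r : ℝ) {A : Finset X}
    (hne : A.Nonempty) (hcard : A.card ≤ n) :
    Vnr μ n r ≤ ∫ x, Metric.infDist x (A : Set X) ^ r ∂μ :=
  csInf_le (vnr_set_bddBelow μ n r) ⟨A, hne, hcard, rfl⟩

lemma vnr_exists [Nonempty X] (μ : Measure X) {n : ℕ} (hn : 1 ≤ n) (r : ℝ)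
    {ε : ℝ} (hε : 0 < ε) :
    ∃ A : Finset X, A.Nonempty ∧ A.card ≤ n ∧
      ∫ x, Metric.infDist x (A : Set X) ^ r ∂μ ≤ Vnr μ n r + ε := by
  have hne : { v : ℝ | ∃ A : Finset X, A.Nonempty ∧ A.card ≤ n ∧
      v = ∫ x, Metric.infDist x (A : Set X) ^ r ∂μ }.Nonempty :=
    ⟨_, {Classical.arbitrary X}, Finset.singleton_nonempty _, by simpa using hn, rfl⟩
  obtain ⟨v, hv, hlt⟩ := exists_lt_of_csInf_lt hne
    (lt_add_of_pos_right (Vnr μ n r) hε)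
  obtain ⟨A, hA1, hA2, rfl⟩ := hv
  exact ⟨A, hA1, hA2, hlt.le⟩

lemma integrable_infDist_rpow [CompactSpace X] [BorelSpace X]
    (ν : Measure X) [IsFiniteMeasure ν] (s : Set X) (r : ℝ) (hr : 0 < r) :
    MeasureTheory.Integrable (fun x => Metric.infDist x s ^ r) ν := by
  have hc : Continuous fun x => Metric.infDist x s ^ r :=
    (Metric.continuous_infDist_pt s).rpow_const fun x => Or.inr hr.le
  exact integrableOn_univ.mp (hc.continuousOn.integrableOn_compact isCompact_univ)

end Aux

section FwAux

variable {X : Type*} [MetricSpace X] {N : ℕ} {f : Fin N → X → X} {Df : Fin N → X → ℝ}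

lemma fw_continuous (hcontr : ∀ i, ∃ c : ℝ, c < 1 ∧ ∀ x y, dist (f i x) (f i y) ≤ c * dist x y)
    (w : List (Fin N)) : Continuous (fw f w) := by
  induction w with
  | nil => exact continuous_id
  | cons i w ih =>
    obtain ⟨c, -, hc⟩ := hcontr i
    have : Continuous (f i) := by
      refine (LipschitzWith.of_dist_le_mul (K := c.toNNReal) fun x y => ?_).continuous
      exact (hc x y).trans (mul_le_mul_of_nonneg_right (Real.le_coe_toNNReal c) dist_nonneg)
    exact this.comp ih

lemma Dfw_pos (hpos : ∀ i x, 0 < Df i x) (w : List (Fin N)) (x : X) : 0 < Dfw f Df w x := by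
  induction w with
  | nil => exact one_pos
  | cons i w ih => exact mul_pos (hpos i _) ih

lemma pword_pos {p : Fin N → ℝ} (hp : ∀ i, 0 < p i) (w : List (Fin N)) : 0 < pword p w := by
  induction w with
  | nil => simp [pword]
  | cons i w ih => simpa [pword] using mul_pos (hp i) ih

end FwAux

/-- Subdivision bound: for a finite maximal antichain `Λ` and `n ≥ Card Λ`,
`V_{n,r}(μ) ≤ C₂^r Σ_{w∈Λ} p_w T_w^r V_{n_w,r}(μ)` for every admissible allocation
`{n_w}` with `n_w ≥ 1` and `Σ n_w ≤ n`. -/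
theorem subdivision_upper_bound {X : Type*} [MetricSpace X] [CompactSpace X] [Nonempty X]
    [MeasurableSpace X] [BorelSpace X]
    {N : ℕ} (f : Fin N → X → X) (Df : Fin N → X → ℝ) (p : Fin N → ℝ) (C₂ r : ℝ)
    (μ : Measure X) [IsProbabilityMeasure μ]
    (hr : 0 < r) (hC₂ : 1 ≤ C₂)
    (hsim : ∀ i x, IsInfSimAt (f i) x (Df i x))
    (hcontr : ∀ i, ∃ c : ℝ, c < 1 ∧ ∀ x y, dist (f i x) (f i y) ≤ c * dist x y)
    (hpos : ∀ i x, 0 < Df i x)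
    (hp : ∀ i, 0 < p i) (hpsum : ∑ i, p i = 1)
    (hdist : ∀ (w : List (Fin N)) (x y : X),
      dist (fw f w x) (fw f w y) ≤ C₂ * (⨆ z, Dfw f Df w z) * dist x y)
    (Λ : Finset (List (Fin N))) (hΛ : IsFiniteMaximalAntichain Λ)
    (hinv : μ = ∑ w ∈ Λ, ENNReal.ofReal (pword p w) • (μ.map (fw f w)))
    (n : ℕ) (hn : Λ.card ≤ n)
    (m : List (Fin N) → ℕ) (hm1 : ∀ w ∈ Λ, 1 ≤ m w) (hmn : ∑ w ∈ Λ, m w ≤ n) :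
    Vnr μ n r ≤ C₂ ^ r *
      ∑ w ∈ Λ, pword p w * (⨆ z, Dfw f Df w z) ^ r * Vnr μ (m w) r := by
  classical
  set T : List (Fin N) → ℝ := fun w => ⨆ z, Dfw f Df w z with hTdef
  show Vnr μ n r ≤ C₂ ^ r * ∑ w ∈ Λ, pword p w * T w ^ r * Vnr μ (m w) r
  have hC₂0 : (0:ℝ) ≤ C₂ := by linarith
  have hT0 : ∀ w, 0 ≤ T w := fun w => Real.iSup_nonneg fun z => (Dfw_pos hpos w z).le
  have hfwcont : ∀ w : List (Fin N), Continuous (fw f w) := fw_continuous hcontr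
  have hΛne : Λ.Nonempty := by
    rcases Finset.eq_empty_or_nonempty Λ with h | h
    · exfalso
      have h1 : μ Set.univ = 1 := measure_univ
      rw [hinv, h] at h1
      simp at h1
    · exact h
  set K : ℝ := C₂ ^ r * ∑ w ∈ Λ, pword p w * T w ^ r with hK
  have hK0 : 0 ≤ K :=
    mul_nonneg (Real.rpow_nonneg hC₂0 r) (Finset.sum_nonneg fun w _ =>
      mul_nonneg (pword_pos hp w).le (Real.rpow_nonneg (hT0 w) r))
  suffices H : ∀ ε : ℝ, 0 < ε →
      Vnr μ n r ≤ (C₂ ^ r * ∑ w ∈ Λ, pword p w * T w ^ r * Vnr μ (m w) r) + ε * K by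
    refine le_of_forall_pos_le_add fun δ hδ => ?_
    have hε : 0 < δ / (K + 1) := div_pos hδ (by linarith)
    refine (H _ hε).trans ?_
    have h2 : (δ / (K + 1)) * K ≤ δ := by
      rw [div_mul_eq_mul_div, div_le_iff₀ (by linarith)]
      nlinarith
    linarith
  intro ε hε
  have hchoice : ∀ w : List (Fin N), ∃ A : Finset X, A.Nonempty ∧ (w ∈ Λ →
      A.card ≤ m w ∧ ∫ x, Metric.infDist x (A : Set X) ^ r ∂μ ≤ Vnr μ (m w) r + ε) := by
    intro w
    by_cases hw : w ∈ Λ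
    · obtain ⟨A, h1, h2, h3⟩ := vnr_exists μ (hm1 w hw) r hε
      exact ⟨A, h1, fun _ => ⟨h2, h3⟩⟩
    · exact ⟨{Classical.arbitrary X}, Finset.singleton_nonempty _, fun h => absurd h hw⟩
  choose Aw hAwne hAwp using hchoice
  set A : Finset X := Λ.biUnion (fun w => (Aw w).image (fw f w)) with hA
  have hAne : A.Nonempty := by
    obtain ⟨w0, hw0⟩ := hΛne
    obtain ⟨a, ha⟩ := hAwne w0
    exact ⟨fw f w0 a, Finset.mem_biUnion.2 ⟨w0, hw0, Finset.mem_image_of_mem _ ha⟩⟩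
  have hAcard : A.card ≤ n :=
    (Finset.card_biUnion_le).trans <| (Finset.sum_le_sum fun w hw =>
      (Finset.card_image_le).trans ((hAwp w hw).1)).trans hmn
  -- pointwise bound
  have key : ∀ w ∈ Λ, ∀ x : X,
      Metric.infDist (fw f w x) (A : Set X) ^ r ≤
        C₂ ^ r * T w ^ r * Metric.infDist x ((Aw w : Set X)) ^ r := by
    intro w hw x
    obtain ⟨a, haA, hinf⟩ := ((Aw w).finite_toSet.isCompact).exists_infDist_eq_dist
      (Finset.coe_nonempty.2 (hAwne w)) x
    have h1 : Metric.infDist (fw f w x) (A : Set X) ≤ C₂ * T w * Metric.infDist x (Aw w : Set X) := by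
      calc Metric.infDist (fw f w x) (A : Set X)
          ≤ Metric.infDist (fw f w x) (((Aw w).image (fw f w) : Finset X) : Set X) :=
            Metric.infDist_le_infDist_of_subset
              (by rw [hA]; exact Finset.coe_subset.2 (Finset.subset_biUnion_of_mem (fun w' => (Aw w').image (fw f w')) hw))
              (Finset.coe_nonempty.2 ((hAwne w).image _))
        _ ≤ dist (fw f w x) (fw f w a) :=
            Metric.infDist_le_dist_of_mem (Finset.mem_coe.2 (Finset.mem_image_of_mem _ haA))
        _ ≤ C₂ * T w * dist x a := hdist w x a
        _ = C₂ * T w * Metric.infDist x (Aw w : Set X) := by rw [hinf]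
    calc Metric.infDist (fw f w x) (A : Set X) ^ r
        ≤ (C₂ * T w * Metric.infDist x (Aw w : Set X)) ^ r :=
          Real.rpow_le_rpow Metric.infDist_nonneg h1 hr.le
      _ = C₂ ^ r * T w ^ r * Metric.infDist x ((Aw w : Set X)) ^ r := by
          rw [Real.mul_rpow (mul_nonneg hC₂0 (hT0 w)) Metric.infDist_nonneg,
            Real.mul_rpow hC₂0 (hT0 w)]
  -- integrability
  have hgc : Continuous fun x => Metric.infDist x (A : Set X) ^ r :=
    (Metric.continuous_infDist_pt _).rpow_const fun x => Or.inr hr.le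
  have hint : ∀ w : List (Fin N),
      MeasureTheory.Integrable (fun x => Metric.infDist (fw f w x) (A : Set X) ^ r) μ := by
    intro w
    have : Continuous fun x => Metric.infDist (fw f w x) (A : Set X) ^ r :=
      hgc.comp (hfwcont w)
    exact integrableOn_univ.mp (this.continuousOn.integrableOn_compact isCompact_univ)
  -- decomposition via the invariance relation
  have hdecomp : ∫ x, Metric.infDist x (A : Set X) ^ r ∂μ =
      ∑ w ∈ Λ, pword p w * ∫ x, Metric.infDist (fw f w x) (A : Set X) ^ r ∂μ := by
    have hintw : ∀ w ∈ Λ, MeasureTheory.Integrable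
        (fun x => Metric.infDist x (A : Set X) ^ r)
        (ENNReal.ofReal (pword p w) • (μ.map (fw f w))) := by
      intro w _
      haveI : IsProbabilityMeasure (μ.map (fw f w)) :=
        Measure.isProbabilityMeasure_map (hfwcont w).aemeasurable
      exact (integrableOn_univ.mp
        (hgc.continuousOn.integrableOn_compact isCompact_univ)).smul_measure
        ENNReal.ofReal_ne_top
    conv_lhs => rw [hinv]
    rw [MeasureTheory.integral_finset_sum_measure hintw]
    refine Finset.sum_congr rfl fun w hw => ?_
    rw [MeasureTheory.integral_smul_measure, ENNReal.toReal_ofReal (pword_pos hp w).le,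
      MeasureTheory.integral_map (hfwcont w).aemeasurable hgc.aestronglyMeasurable,
      smul_eq_mul]
  -- per-word integral bound
  have Ile : ∀ w ∈ Λ, ∫ x, Metric.infDist (fw f w x) (A : Set X) ^ r ∂μ ≤
      C₂ ^ r * T w ^ r * (Vnr μ (m w) r + ε) := by
    intro w hw
    have hconst : (0:ℝ) ≤ C₂ ^ r * T w ^ r :=
      mul_nonneg (Real.rpow_nonneg hC₂0 r) (Real.rpow_nonneg (hT0 w) r)
    calc ∫ x, Metric.infDist (fw f w x) (A : Set X) ^ r ∂μ
        ≤ ∫ x, C₂ ^ r * T w ^ r * Metric.infDist x ((Aw w : Set X)) ^ r ∂μ :=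
          MeasureTheory.integral_mono (hint w)
            ((integrable_infDist_rpow μ _ r hr).const_mul _) (key w hw)
      _ = C₂ ^ r * T w ^ r * ∫ x, Metric.infDist x ((Aw w : Set X)) ^ r ∂μ :=
          MeasureTheory.integral_const_mul _ _
      _ ≤ C₂ ^ r * T w ^ r * (Vnr μ (m w) r + ε) :=
          mul_le_mul_of_nonneg_left (hAwp w hw).2 hconst
  -- assemble
  calc Vnr μ n r ≤ ∫ x, Metric.infDist x (A : Set X) ^ r ∂μ := vnr_le μ n r hAne hAcard
    _ = ∑ w ∈ Λ, pword p w * ∫ x, Metric.infDist (fw f w x) (A : Set X) ^ r ∂μ := hdecomp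
    _ ≤ ∑ w ∈ Λ, pword p w * (C₂ ^ r * T w ^ r * (Vnr μ (m w) r + ε)) :=
        Finset.sum_le_sum fun w hw =>
          mul_le_mul_of_nonneg_left (Ile w hw) (pword_pos hp w).le
    _ = (C₂ ^ r * ∑ w ∈ Λ, pword p w * T w ^ r * Vnr μ (m w) r) + ε * K := by
        rw [hK, Finset.mul_sum, Finset.mul_sum, Finset.mul_sum, ← Finset.sum_add_distrib]
        exact Finset.sum_congr rfl fun w _ => by ring
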